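/- arXiv:1210.6067 — 2 statements merged into one kernel-verified Lean document; each statement's English description precedes it below -/
import Mathlib

section
/- Elementary strong shift equivalence of square matrices over the non-negative integers is symmetric but not transitive: the matrices E = [[10,2],[2,1]] and G = [[9,4],[3,2]] are each elementary strong shift equivalent to F = [[5,6],[4,6]], but E is not elementary strong shift equivalent to G. -/
/-- Two square matrices with non-negative integer entries (possibly of different sizes)
are elementary strong shift equivalent if `E = RS` and `F = SR` for some non-negative
integer matrices `R`, `S`. -/
def ElemSSE {m n : ℕ} (E : Matrix (Fin m) (Fin m) ℕ) (F : Matrix (Fin n) (Fin n) ℕ) :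
    Prop :=
  ∃ (R : Matrix (Fin m) (Fin n) ℕ) (S : Matrix (Fin n) (Fin m) ℕ), E = R * S ∧ F = S * R

/-- Elementary strong shift equivalence of square matrices over the non-negative integers
is symmetric but not transitive: Williams' matrices `E = [[10,2],[2,1]]` and
`G = [[9,4],[3,2]]` are each elementary strong shift equivalent to `F = [[5,6],[4,6]]`,
but `E` is not elementary strong shift equivalent to `G`. -/
theorem elemSSE_symm_not_trans :
    (∀ (m n : ℕ) (E : Matrix (Fin m) (Fin m) ℕ) (F : Matrix (Fin n) (Fin n) ℕ),
      ElemSSE E F → ElemSSE F E) ∧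
    ElemSSE !![10, 2; 2, 1] !![5, 6; 4, 6] ∧
    ElemSSE !![9, 4; 3, 2] !![5, 6; 4, 6] ∧
    ¬ ElemSSE !![10, 2; 2, 1] !![9, 4; 3, 2] := by
  refine ⟨fun m n E F ⟨R, S, h1, h2⟩ => ⟨S, R, h2, h1⟩, ?_, ?_, ?_⟩
  · refine ⟨!![2, 3; 1, 0], !![2, 1; 2, 0], ?_, ?_⟩ <;>
      ext i j <;> fin_cases i <;> fin_cases j <;>
      simp [Matrix.mul_apply, Fin.sum_univ_two]
  · refine ⟨!![1, 2; 1, 0], !![3, 2; 3, 1], ?_, ?_⟩ <;>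
      ext i j <;> fin_cases i <;> fin_cases j <;>
      simp [Matrix.mul_apply, Fin.sum_univ_two]
  · rintro ⟨R, S, hE, hG⟩
    obtain ⟨a, b, c, d, rfl⟩ : ∃ a b c d, R = !![a, b; c, d] :=
      ⟨R 0 0, R 0 1, R 1 0, R 1 1, by ext i j; fin_cases i <;> fin_cases j <;> rfl⟩
    obtain ⟨p, q, r, s, rfl⟩ : ∃ p q r s, S = !![p, q; r, s] :=
      ⟨S 0 0, S 0 1, S 1 0, S 1 1, by ext i j; fin_cases i <;> fin_cases j <;> rfl⟩
    have e1 : 10 = a * p + b * r := by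
      have := congrFun (congrFun hE 0) 0
      simpa [Matrix.mul_apply, Fin.sum_univ_two] using this
    have e2 : 2 = a * q + b * s := by
      have := congrFun (congrFun hE 0) 1
      simpa [Matrix.mul_apply, Fin.sum_univ_two] using this
    have e3 : 2 = c * p + d * r := by
      have := congrFun (congrFun hE 1) 0
      simpa [Matrix.mul_apply, Fin.sum_univ_two] using this
    have e4 : 1 = c * q + d * s := by
      have := congrFun (congrFun hE 1) 1
      simpa [Matrix.mul_apply, Fin.sum_univ_two] using this
    have f1 : 9 = p * a + q * c := by
      have := congrFun (congrFun hG 0) 0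
      simpa [Matrix.mul_apply, Fin.sum_univ_two] using this
    have f2 : 4 = p * b + q * d := by
      have := congrFun (congrFun hG 0) 1
      simpa [Matrix.mul_apply, Fin.sum_univ_two] using this
    have f3 : 3 = r * a + s * c := by
      have := congrFun (congrFun hG 1) 0
      simpa [Matrix.mul_apply, Fin.sum_univ_two] using this
    have f4 : 2 = r * b + s * d := by
      have := congrFun (congrFun hG 1) 1
      simpa [Matrix.mul_apply, Fin.sum_univ_two] using this
    -- from e4 : c*q + d*s = 1
    have hcase : (c * q = 1 ∧ d * s = 0) ∨ (c * q = 0 ∧ d * s = 1) := by omega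
    rcases hcase with ⟨h1, h2⟩ | ⟨h1, h2⟩
    · have hc := Nat.eq_one_of_mul_eq_one_right h1
      have hq := Nat.eq_one_of_mul_eq_one_left h1
      subst hc; subst hq
      -- f1: p*a = 8, e2: a ≤ 2, e3: p ≤ 2
      have ha : a ≤ 2 := by nlinarith
      have hp : p ≤ 2 := by nlinarith
      have : p * a = 8 := by omega
      interval_cases a <;> interval_cases p <;> omega
    · have hd := Nat.eq_one_of_mul_eq_one_right h2
      have hs := Nat.eq_one_of_mul_eq_one_left h2
      subst hd; subst hs
      -- f4: r*b = 1
      have hrb : r * b = 1 := by omega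
      have hr := Nat.eq_one_of_mul_eq_one_right hrb
      have hb := Nat.eq_one_of_mul_eq_one_left hrb
      subst hr; subst hb
      -- e3: c*p = 1
      have hcp : c * p = 1 := by omega
      have hc := Nat.eq_one_of_mul_eq_one_right hcp
      have hp := Nat.eq_one_of_mul_eq_one_left hcp
      subst hc; subst hp
      -- h1: q = 0, f2: 4 = 1 + q
      omega
end

section
/- Let X be a C*-correspondence over A. X admits a Hilbert A-bimodule structure if and only if K(X) ⊆ φ_X(A) and φ_X^{-1}(K(X)) decomposes as the direct sum of ideals ker φ_X ⊕ J_X, where J_X = (ker φ_X)^⊥ ∩ φ_X^{-1}(K(X)); equivalently, if and only if the restriction of φ_X to J_X is a *-isomorphism onto K(X). -/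
/-!
Let `J` be Katsura's ideal. The left action `φ` is injective on `(ker φ)^⊥`, since an element
`a` there with `φ a = 0` satisfies `a a* = 0`. It is even isometric there: `a ↦ (φ a, φ a*)`,
extended to the completion of `E`, is a `⋆`-monomorphism of the C⋆-algebra `(ker φ)^⊥` into a
C⋆-algebra of adjointable operators. Given a left inner product `L`, every `L ξ η` lies in
`(ker φ)^⊥` and is mapped to the rank-one operator `θ_{ξ,η}`; as `φ((ker φ)^⊥)` is closed, it
contains `K(E)`, so `φ` maps `J` onto `K(E)`. Conversely, if `φ(J) = K(E)`, then
`L ξ η := (φ|_J)⁻¹ θ_{ξ,η}` is a left inner product: its algebraic properties are transported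
from those of the `θ_{ξ,η}` by injectivity, and positivity follows from that of the operators
`θ_{ξ,ξ}` through the negative part of `L ξ ξ`. Finally, `φ⁻¹(K(E)) = ker φ + J` is a
reformulation of `φ(J) = K(E)`.
-/

open scoped RightActions

/-- The December 2024 Mathlib `CStarModule` (right `A`-module via `SMul Aᵐᵒᵖ E`), whose name
Mathlib now uses for a class with another convention. -/
class CStarModuleOld (A E : Type*) [NonUnitalSemiring A] [StarRing A] [Module ℂ A]
    [AddCommGroup E] [Module ℂ E] [PartialOrder A] [SMul Aᵐᵒᵖ E] [Norm A] [Norm E]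
    extends Inner A E where
  inner_add_right {x} {y} {z} : inner x (y + z) = inner x y + inner x z
  inner_self_nonneg {x} : 0 ≤ inner x x
  inner_self {x} : inner x x = 0 ↔ x = 0
  inner_op_smul_right {a : A} {x y : E} : inner x (y <• a) = inner x y * a
  inner_smul_right_complex {z : ℂ} {x} {y} : inner x (z • y) = z • inner x y
  star_inner x y : star (inner x y) = inner y x
  norm_eq_sqrt_norm_inner_self x : ‖x‖ = √‖inner x x‖

open UniformSpace (Completion)
open MulOpposite (op unop)

namespace ContinuousLinearMap

variable {𝕜 E : Type*} [NontriviallyNormedField 𝕜] [NormedAddCommGroup E] [NormedSpace 𝕜 E]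

lemma ext_completion {f g : Completion E →L[𝕜] Completion E} (h : ∀ ξ : E, f ξ = g ξ) :
    f = g :=
  ext (UniformSpace.Completion.ext' f.continuous g.continuous h)

variable (𝕜 E) in
noncomputable def completionAlgHom :
    (E →L[𝕜] E) →ₐ[𝕜] (Completion E →L[𝕜] Completion E) where
  toFun := completion
  map_one' := ext_completion fun _ => by simp
  map_mul' _ _ := ext_completion fun _ => by simp
  map_zero' := ext_completion fun _ => by simp
  map_add' _ _ := ext_completion fun _ => by simp [UniformSpace.Completion.coe_add]
  commutes' _ := ext_completion fun _ => by simp [UniformSpace.Completion.coe_smul]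

@[simp] lemma completionAlgHom_apply_coe (T : E →L[𝕜] E) (ξ : E) :
    completionAlgHom 𝕜 E T ξ = T ξ :=
  completion_apply_coe T ξ

@[simp] lemma norm_completionAlgHom (T : E →L[𝕜] E) : ‖completionAlgHom 𝕜 E T‖ = ‖T‖ := by
  refine le_antisymm (opNorm_le_bound _ (norm_nonneg T) fun x => ?_) ?_
  · induction x using UniformSpace.Completion.induction_on with
    | hp => exact isClosed_le (by fun_prop) (by fun_prop)
    | ih ξ => simpa [UniformSpace.Completion.norm_coe] using T.le_opNorm ξ
  · refine opNorm_le_bound _ (norm_nonneg _) fun ξ => ?_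
    simpa [UniformSpace.Completion.norm_coe] using (completionAlgHom 𝕜 E T).le_opNorm ξ

end ContinuousLinearMap

lemma IsSelfAdjoint.eq_zero_of_mul_mul_self_eq_zero {R : Type*} [NonUnitalNormedRing R]
    [StarRing R] [CStarRing R] {n : R} (hn : IsSelfAdjoint n) (h : n * n * n = 0) : n = 0 := by
  have hsq : n * n = 0 := by
    rw [← CStarRing.star_mul_self_eq_zero_iff, star_mul, hn.star_eq, ← mul_assoc, h, zero_mul]
  rwa [← CStarRing.star_mul_self_eq_zero_iff, hn.star_eq]

lemma image_inter_preimage_eq_iff_decomposition {G H F : Type*} [AddGroup G] [AddGroup H]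
    [FunLike F G H] [AddMonoidHomClass F G H] (f : F) (P : Set G) (K : Set H) :
    f '' (P ∩ f ⁻¹' K) = K ↔
      K ⊆ Set.range f ∧ ∀ a, f a ∈ K ↔ ∃ b c, f b = 0 ∧ c ∈ P ∩ f ⁻¹' K ∧ a = b + c := by
  constructor
  · intro himg
    refine ⟨himg ▸ Set.image_subset_range _ _, fun a => ⟨fun ha => ?_, ?_⟩⟩
    · obtain ⟨c, hc, hfc⟩ := himg.symm ▸ ha
      exact ⟨a - c, c, by rw [map_sub, hfc, sub_self], hc, (sub_add_cancel a c).symm⟩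
    · rintro ⟨b, c, hb, hc, rfl⟩
      rw [map_add, hb, zero_add]
      exact hc.2
  · rintro ⟨hrange, hdec⟩
    refine subset_antisymm (Set.image_subset_iff.mpr fun a ha => ha.2) fun T hT => ?_
    obtain ⟨a, rfl⟩ := hrange hT
    obtain ⟨b, c, hb, hc, rfl⟩ := (hdec a).mp hT
    exact ⟨c, hc, by rw [map_add, hb, zero_add]⟩

attribute [simp] CStarModuleOld.inner_add_right CStarModuleOld.star_inner
  CStarModuleOld.inner_op_smul_right CStarModuleOld.inner_smul_right_complex

namespace CStarModuleOld

variable {A E : Type*} [NonUnitalCStarAlgebra A] [PartialOrder A]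
  [NormedAddCommGroup E] [NormedSpace ℂ E] [SMul Aᵐᵒᵖ E] [CStarModuleOld A E]

local notation "⟪" x ", " y "⟫" => inner A x y

@[simp] lemma inner_add_left {x y z : E} : ⟪x + y, z⟫ = ⟪x, z⟫ + ⟪y, z⟫ := by
  rw [← star_inner, inner_add_right, star_add, star_inner, star_inner]

@[simp] lemma inner_op_smul_left {a : A} {x y : E} : ⟪x <• a, y⟫ = star a * ⟪x, y⟫ := by
  rw [← star_inner y, inner_op_smul_right, star_mul, star_inner]

@[simp] lemma inner_smul_left_complex {z : ℂ} {x y : E} : ⟪z • x, y⟫ = star z • ⟪x, y⟫ := by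
  rw [← star_inner y, inner_smul_right_complex, star_smul, star_inner]

lemma inner_smul_left_real {z : ℝ} {x y : E} : ⟪z • x, y⟫ = z • ⟪x, y⟫ := by
  simpa using inner_smul_left_complex (A := A) (z := (z : ℂ)) (x := x) (y := y)

lemma inner_smul_right_real {z : ℝ} {x y : E} : ⟪x, z • y⟫ = z • ⟪x, y⟫ := by
  simpa using inner_smul_right_complex (A := A) (z := (z : ℂ)) (x := x) (y := y)

@[simp] lemma inner_zero_right {x : E} : ⟪x, 0⟫ = 0 := by
  simpa using inner_smul_right_complex (A := A) (z := 0) (x := x) (y := 0)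

@[simp] lemma inner_zero_left {x : E} : ⟪0, x⟫ = 0 := by
  rw [← star_inner, inner_zero_right, star_zero]

@[simp] lemma inner_neg_right {x y : E} : ⟪x, -y⟫ = -⟪x, y⟫ := by
  rw [← neg_one_smul ℂ y, inner_smul_right_complex, neg_one_smul]

@[simp] lemma inner_neg_left {x y : E} : ⟪-x, y⟫ = -⟪x, y⟫ := by
  rw [← star_inner, inner_neg_right, star_neg, star_inner]

@[simp] lemma inner_sub_right {x y z : E} : ⟪x, y - z⟫ = ⟪x, y⟫ - ⟪x, z⟫ := by
  simp [sub_eq_add_neg]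

@[simp] lemma inner_sub_left {x y z : E} : ⟪x - y, z⟫ = ⟪x, z⟫ - ⟪y, z⟫ := by
  simp [sub_eq_add_neg]

variable (A) in
lemma ext_inner_left {v w : E} (h : ∀ x : E, ⟪x, v⟫ = ⟪x, w⟫) : v = w := by
  rw [← sub_eq_zero, ← inner_self (A := A), inner_sub_right, h, sub_self]

variable (A) in
lemma norm_sq_eq {x : E} : ‖x‖ ^ 2 = ‖⟪x, x⟫‖ := by
  rw [norm_eq_sqrt_norm_inner_self (A := A) x, Real.sq_sqrt (norm_nonneg _)]

lemma op_smul_add (ξ : E) (a b : A) : ξ <• (a + b) = ξ <• a + ξ <• b :=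
  ext_inner_left A fun x => by simp only [inner_op_smul_right, inner_add_right, mul_add]

lemma op_smul_smul_complex (ξ : E) (z : ℂ) (a : A) : ξ <• (z • a) = z • (ξ <• a) :=
  ext_inner_left A fun x => by
    simp only [inner_op_smul_right, inner_smul_right_complex, mul_smul_comm]

lemma norm_op_smul_le (ξ : E) (a : A) : ‖ξ <• a‖ ≤ ‖ξ‖ * ‖a‖ := by
  refine (pow_le_pow_iff_left₀ (norm_nonneg _) (by positivity) two_ne_zero).mp ?_
  calc ‖ξ <• a‖ ^ 2 = ‖star a * ⟪ξ, ξ⟫ * a‖ := by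
        rw [norm_sq_eq A, inner_op_smul_right, inner_op_smul_left]
    _ ≤ ‖a‖ * ‖⟪ξ, ξ⟫‖ * ‖a‖ := by
        grw [norm_mul_le, norm_mul_le, norm_star]
    _ = (‖ξ‖ * ‖a‖) ^ 2 := by rw [← norm_sq_eq A]; ring

variable (A) in
def IsAdjointPair (T S : E →L[ℂ] E) : Prop :=
  ∀ ξ η : E, ⟪T ξ, η⟫ = ⟪ξ, S η⟫

lemma IsAdjointPair.symm {T S : E →L[ℂ] E} (h : IsAdjointPair A T S) : IsAdjointPair A S T :=
  fun ξ η => by rw [← star_inner, ← h, star_inner]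

lemma IsAdjointPair.map_op_smul {T S : E →L[ℂ] E} (h : IsAdjointPair A T S) (ξ : E) (b : A) :
    T (ξ <• b) = T ξ <• b :=
  ext_inner_left A fun x => by
    rw [← h.symm, inner_op_smul_right, inner_op_smul_right, h.symm]

lemma IsAdjointPair.unique {T S S' : E →L[ℂ] E} (h : IsAdjointPair A T S)
    (h' : IsAdjointPair A T S') : S = S' :=
  ContinuousLinearMap.ext fun η => ext_inner_left A fun ξ => by rw [← h, h']

variable (A E) in
def compactOperators : Set (E →L[ℂ] E) :=
  closure (Submodule.span ℂ {T : E →L[ℂ] E | ∃ ξ η : E, ∀ ζ : E, T ζ = ξ <• ⟪η, ζ⟫})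

variable (E) in
/-- An adjointable operator `T` with adjoint `S` is recorded as the pair `(T̂, op Ŝ)` of the
extensions to the completion; the involution is then the swap of the two coordinates. -/
abbrev OperatorPair : Type _ :=
  (Completion E →L[ℂ] Completion E) × (Completion E →L[ℂ] Completion E)ᵐᵒᵖ

noncomputable def toOperatorPair (T S : E →L[ℂ] E) : OperatorPair E :=
  (ContinuousLinearMap.completionAlgHom ℂ E T, op (ContinuousLinearMap.completionAlgHom ℂ E S))

variable (A E) in
noncomputable def adjointPairSubring : Subring (OperatorPair E) where
  carrier := {p | ∃ T S, IsAdjointPair A T S ∧ p = toOperatorPair T S}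
  one_mem' := ⟨1, 1, fun _ _ => rfl, by simp [toOperatorPair]; rfl⟩
  zero_mem' := ⟨0, 0, fun _ _ => by simp, by simp [toOperatorPair]; rfl⟩
  add_mem' := by
    rintro _ _ ⟨T, S, h, rfl⟩ ⟨T', S', h', rfl⟩
    exact ⟨T + T', S + S', fun ξ η => by simp [h ξ η, h' ξ η], by simp [toOperatorPair]⟩
  neg_mem' := by
    rintro _ ⟨T, S, h, rfl⟩
    exact ⟨-T, -S, fun ξ η => by simp [h ξ η], by simp [toOperatorPair]⟩
  mul_mem' := by
    rintro _ _ ⟨T, S, h, rfl⟩ ⟨T', S', h', rfl⟩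
    exact ⟨T * T', S' * S, fun ξ η => (h (T' ξ) η).trans (h' ξ (S η)),
      by simp [toOperatorPair]⟩

variable (A E) in
noncomputable def adjointable : Subring (OperatorPair E) :=
  (adjointPairSubring A E).topologicalClosure

lemma toOperatorPair_mem_adjointable {T S : E →L[ℂ] E} (h : IsAdjointPair A T S) :
    toOperatorPair T S ∈ adjointable A E :=
  (adjointPairSubring A E).le_topologicalClosure ⟨T, S, h, rfl⟩

lemma adjointable_induction {P : OperatorPair E → Prop} (hP : IsClosed {p | P p})
    (hgen : ∀ T S : E →L[ℂ] E, IsAdjointPair A T S → P (toOperatorPair T S))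
    {p : OperatorPair E} (hp : p ∈ adjointable A E) : P p :=
  closure_minimal (by rintro _ ⟨T, S, h, rfl⟩; exact hgen T S h) hP hp

lemma map_mem_adjointable {f : OperatorPair E → OperatorPair E} (hf : Continuous f)
    (hgen : ∀ T S : E →L[ℂ] E, IsAdjointPair A T S →
      f (toOperatorPair T S) ∈ adjointPairSubring A E)
    {p : OperatorPair E} (hp : p ∈ adjointable A E) : f p ∈ adjointable A E :=
  map_mem_closure hf hp (by rintro _ ⟨T, S, h, rfl⟩; exact hgen T S h)

lemma continuous_unop_snd : Continuous fun p : OperatorPair E => unop p.2 :=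
  MulOpposite.continuous_unop.comp continuous_snd

lemma swap_mem_adjointable {p : OperatorPair E} (hp : p ∈ adjointable A E) :
    (unop p.2, op p.1) ∈ adjointable A E :=
  map_mem_adjointable (continuous_unop_snd.prodMk (MulOpposite.continuous_op.comp continuous_fst))
    (fun _ _ h => ⟨_, _, h.symm, rfl⟩) hp

lemma smul_mem_adjointable (z : ℂ) {p : OperatorPair E} (hp : p ∈ adjointable A E) :
    (z • p.1, op (star z • unop p.2)) ∈ adjointable A E := by
  refine map_mem_adjointable (f := fun p : OperatorPair E => (z • p.1, op (star z • unop p.2)))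
    ((continuous_fst.const_smul z).prodMk
      (MulOpposite.continuous_op.comp (by exact continuous_unop_snd.const_smul (star z))))
    (fun T S h => ⟨z • T, star z • S, fun ξ η => ?_, ?_⟩) hp
  · simp [h ξ η]
  · simp [toOperatorPair]

namespace adjointable

noncomputable instance : Star (adjointable A E) where
  star x := ⟨(unop x.1.2, op x.1.1), swap_mem_adjointable x.2⟩

noncomputable instance : StarRing (adjointable A E) where
  star_involutive _ := rfl
  star_mul _ _ := rfl
  star_add _ _ := rfl

noncomputable instance : SMul ℂ (adjointable A E) where
  smul z x := ⟨(z • x.1.1, op (star z • unop x.1.2)), smul_mem_adjointable z x.2⟩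

lemma coe_star (x : adjointable A E) :
    ((star x : adjointable A E) : OperatorPair E) = (unop x.1.2, op x.1.1) :=
  rfl

lemma coe_smul (z : ℂ) (x : adjointable A E) :
    ((z • x : adjointable A E) : OperatorPair E) = (z • x.1.1, op (star z • unop x.1.2)) := rfl

end adjointable

variable {φ : A →ₙₐ[ℂ] (E →L[ℂ] E)}

lemma map_star_eq_zero (hφ : ∀ a, IsAdjointPair A (φ a) (φ (star a))) {a : A} (ha : φ a = 0) :
    φ (star a) = 0 :=
  ContinuousLinearMap.ext fun η => ext_inner_left A fun ξ => by simp [← hφ a ξ η, ha]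

lemma mul_eq_zero_of_map_eq_zero (hφ : ∀ a, IsAdjointPair A (φ a) (φ (star a))) {a b : A}
    (ha : ∀ c, φ c = 0 → a * c = 0) (hb : φ b = 0) : b * a = 0 := by
  have hba : φ (star (b * a)) = 0 := map_star_eq_zero hφ (by rw [map_mul, hb, zero_mul])
  rw [← CStarRing.mul_star_self_eq_zero_iff, mul_assoc, ha _ hba, mul_zero]

variable (φ) in
def kerPerp (hφ : ∀ a, IsAdjointPair A (φ a) (φ (star a))) : NonUnitalStarSubalgebra ℂ A where
  carrier := {a | ∀ b, φ b = 0 → a * b = 0}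
  zero_mem' _ _ := zero_mul _
  add_mem' ha hb c hc := by rw [add_mul, ha c hc, hb c hc, add_zero]
  mul_mem' ha hb c hc := by rw [mul_assoc, hb c hc, mul_zero]
  smul_mem' z _ ha c hc := by rw [smul_mul_assoc, ha c hc, smul_zero]
  star_mem' ha c hc := by
    rw [← star_star c, ← star_mul, mul_eq_zero_of_map_eq_zero hφ ha (map_star_eq_zero hφ hc),
      star_zero]

variable {hφ : ∀ a, IsAdjointPair A (φ a) (φ (star a))}

lemma mul_mem_kerPerp_left (c : A) {a : A} (ha : a ∈ kerPerp φ hφ) : c * a ∈ kerPerp φ hφ :=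
  fun b hb => by rw [mul_assoc, ha b hb, mul_zero]

lemma mul_mem_kerPerp_right {a : A} (ha : a ∈ kerPerp φ hφ) (c : A) : a * c ∈ kerPerp φ hφ :=
  fun b hb => by rw [mul_assoc, ha _ (by rw [map_mul, hb, mul_zero])]

lemma eq_zero_of_mem_kerPerp {a : A} (ha : a ∈ kerPerp φ hφ) (h0 : φ a = 0) : a = 0 :=
  (CStarRing.mul_star_self_eq_zero_iff a).mp (ha _ (map_star_eq_zero hφ h0))

lemma injOn_kerPerp : Set.InjOn φ (kerPerp φ hφ) := fun a ha b hb hab =>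
  sub_eq_zero.mp (eq_zero_of_mem_kerPerp (sub_mem ha hb) (by rw [map_sub, hab, sub_self]))

lemma isClosed_kerPerp : IsClosed (kerPerp φ hφ : Set A) := by
  have : (kerPerp φ hφ : Set A) = ⋂ b, ⋂ (_ : φ b = 0), {a | a * b = 0} := by
    ext a
    simp only [Set.mem_iInter]
    rfl
  rw [this]
  exact isClosed_iInter fun b => isClosed_iInter fun _ =>
    isClosed_eq (continuous_mul_const b) continuous_const

variable (φ hφ) in
def katsuraIdeal : Set A :=
  (kerPerp φ hφ : Set A) ∩ φ ⁻¹' compactOperators A E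

lemma inner_map_star_mul (hφ : ∀ a, IsAdjointPair A (φ a) (φ (star a))) (c d : A) (ζ η : E) :
    ⟪ζ, φ (star c * d) η⟫ = ⟪φ c ζ, φ d η⟫ := by
  rw [map_mul]
  exact (hφ c ζ _).symm

variable [StarOrderedRing A]

lemma inner_mul_inner_swap_le {x y : E} : ⟪y, x⟫ * ⟪x, y⟫ ≤ ‖x‖ ^ 2 • ⟪y, y⟫ := by
  rcases eq_or_ne x 0 with rfl | hx
  · simp
  have key (a : A) : 0 ≤ ‖x‖ ^ 2 • (star a * a) - ‖x‖ ^ 2 • (star a * ⟪x, y⟫)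
      - ‖x‖ ^ 2 • (⟪y, x⟫ * a) + ‖x‖ ^ 2 • (‖x‖ ^ 2 • ⟪y, y⟫) :=
    calc (0 : A) ≤ ⟪x <• a - ‖x‖ ^ 2 • y, x <• a - ‖x‖ ^ 2 • y⟫ := inner_self_nonneg
      _ = star a * ⟪x, x⟫ * a - ‖x‖ ^ 2 • (star a * ⟪x, y⟫)
          - ‖x‖ ^ 2 • (⟪y, x⟫ * a) + ‖x‖ ^ 2 • (‖x‖ ^ 2 • ⟪y, y⟫) := by
        simp only [inner_sub_right, inner_op_smul_right, inner_sub_left, inner_op_smul_left,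
          inner_smul_left_real, inner_smul_right_real, smul_sub,
          mul_assoc, smul_mul_assoc, sub_mul]
        abel
      _ ≤ _ := by
        gcongr
        calc _ ≤ ‖⟪x, x⟫‖ • (star a * a) :=
              CStarAlgebra.star_left_conjugate_le_norm_smul (hb := star_inner x x)
          _ = ‖x‖ ^ 2 • (star a * a) := by rw [norm_sq_eq A]
  have := key ⟪x, y⟫
  simp only [star_inner, sub_self, zero_sub, le_neg_add_iff_add_le, add_zero] at this
  rwa [smul_le_smul_iff_of_pos_left (pow_pos (norm_pos_iff.mpr hx) _)] at this

variable (E) in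
lemma norm_inner_le {x y : E} : ‖⟪x, y⟫‖ ≤ ‖x‖ * ‖y‖ := by
  refine (pow_le_pow_iff_left₀ (norm_nonneg _) (by positivity) two_ne_zero).mp ?_
  calc ‖⟪x, y⟫‖ ^ 2 = ‖⟪y, x⟫ * ⟪x, y⟫‖ := by
        rw [← star_inner x, CStarRing.norm_star_mul_self, pow_two]
    _ ≤ ‖‖x‖ ^ 2 • ⟪y, y⟫‖ := by
        refine CStarAlgebra.norm_le_norm_of_nonneg_of_le ?_ inner_mul_inner_swap_le
        rw [← star_inner x]
        exact star_mul_self_nonneg _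
    _ = (‖x‖ * ‖y‖) ^ 2 := by
        rw [norm_smul, norm_pow, norm_norm, ← norm_sq_eq A, mul_pow]

variable (A) in
noncomputable def rankOne (ξ η : E) : E →L[ℂ] E :=
  LinearMap.mkContinuous
    { toFun := fun ζ => ξ <• ⟪η, ζ⟫
      map_add' := fun ζ ζ' => by rw [inner_add_right, op_smul_add]
      map_smul' := fun z ζ => by rw [inner_smul_right_complex, op_smul_smul_complex]; rfl }
    (‖ξ‖ * ‖η‖)
    fun ζ => calc ‖ξ <• ⟪η, ζ⟫‖ ≤ ‖ξ‖ * (‖η‖ * ‖ζ‖) :=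
        (norm_op_smul_le ξ _).trans (by gcongr; exact norm_inner_le E)
      _ = ‖ξ‖ * ‖η‖ * ‖ζ‖ := by ring

@[simp] lemma rankOne_apply (ξ η ζ : E) : rankOne A ξ η ζ = ξ <• ⟪η, ζ⟫ := rfl

lemma rankOne_mem_compactOperators (ξ η : E) : rankOne A ξ η ∈ compactOperators A E :=
  subset_closure (Submodule.subset_span ⟨ξ, η, fun _ => rfl⟩)

namespace IsAdjointPair

variable {T S : E →L[ℂ] E}

lemma norm_sq_le (h : IsAdjointPair A T S) : ‖T‖ ^ 2 ≤ ‖S * T‖ := by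
  refine (Real.le_sqrt (norm_nonneg _) (norm_nonneg _)).mp
    (T.opNorm_le_bound (Real.sqrt_nonneg _) fun ξ => ?_)
  refine (pow_le_pow_iff_left₀ (norm_nonneg _) (by positivity) two_ne_zero).mp ?_
  calc ‖T ξ‖ ^ 2 = ‖⟪ξ, (S * T) ξ⟫‖ := by rw [norm_sq_eq A, h]; rfl
    _ ≤ ‖ξ‖ * (‖S * T‖ * ‖ξ‖) := (norm_inner_le E).trans (by gcongr; exact (S * T).le_opNorm ξ)
    _ = (√‖S * T‖ * ‖ξ‖) ^ 2 := by rw [mul_pow, Real.sq_sqrt (norm_nonneg _)]; ring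

lemma norm_le (h : IsAdjointPair A T S) : ‖T‖ ≤ ‖S‖ := by
  nlinarith [h.norm_sq_le, norm_mul_le S T, norm_nonneg T, norm_nonneg S]

lemma norm_eq (h : IsAdjointPair A T S) : ‖T‖ = ‖S‖ :=
  le_antisymm h.norm_le h.symm.norm_le

end IsAdjointPair

lemma IsAdjointPair.mul_rankOne {T S : E →L[ℂ] E} (h : IsAdjointPair A T S) (ξ η : E) :
    T * rankOne A ξ η = rankOne A (T ξ) η :=
  ContinuousLinearMap.ext fun _ => h.map_op_smul ξ _

lemma isAdjointPair_rankOne (ξ η : E) : IsAdjointPair A (rankOne A ξ η) (rankOne A η ξ) :=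
  fun _ _ => by simp

lemma inner_rankOne_self_nonneg (ξ ζ : E) : 0 ≤ ⟪ζ, rankOne A ξ ξ ζ⟫ := by
  rw [rankOne_apply, inner_op_smul_right, ← star_inner ξ ζ]
  exact star_mul_self_nonneg _

lemma eq_zero_of_rankOne_self_eq_zero {ξ : E} (h : rankOne A ξ ξ = 0) : ξ = 0 := by
  have h2 : ⟪ξ, ξ⟫ * ⟪ξ, ξ⟫ = 0 := by
    simpa only [rankOne_apply, inner_op_smul_right, zero_apply,
      inner_zero_right] using congrArg (fun T => ⟪ξ, T ξ⟫) h
  rw [← inner_self (A := A), ← CStarRing.star_mul_self_eq_zero_iff, star_inner]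
  exact h2

namespace adjointable

lemma norm_unop_snd_eq_norm_fst {p : OperatorPair E} (hp : p ∈ adjointable A E) :
    ‖unop p.2‖ = ‖p.1‖ :=
  adjointable_induction (P := fun p : OperatorPair E => ‖unop p.2‖ = ‖p.1‖)
    (isClosed_eq continuous_unop_snd.norm continuous_fst.norm)
    (fun _ _ h => by simpa [toOperatorPair] using h.norm_eq.symm) hp

lemma norm_eq_norm_fst (x : adjointable A E) : ‖x‖ = ‖x.1.1‖ := by
  rw [show ‖x‖ = max ‖x.1.1‖ ‖x.1.2‖ from rfl, ← MulOpposite.norm_unop,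
    norm_unop_snd_eq_norm_fst x.2, max_self]

lemma ext_fst {x y : adjointable A E} (h : x.1.1 = y.1.1) : x = y := by
  rw [← sub_eq_zero, ← norm_eq_zero, norm_eq_norm_fst]
  exact norm_eq_zero.mpr (sub_eq_zero.mpr h)

noncomputable instance : Module ℂ (adjointable A E) :=
  Function.Injective.module ℂ (⟨⟨fun x => x.1.1, rfl⟩, fun _ _ => rfl⟩ :
    adjointable A E →+ (Completion E →L[ℂ] Completion E)) (fun _ _ => ext_fst) fun _ _ => rfl

noncomputable instance : NormedSpace ℂ (adjointable A E) where
  norm_smul_le z x := by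
    rw [norm_eq_norm_fst, norm_eq_norm_fst]
    exact norm_smul_le z x.1.1

instance : IsScalarTower ℂ (adjointable A E) (adjointable A E) where
  smul_assoc z x y := ext_fst (smul_mul_assoc z x.1.1 y.1.1)

instance : SMulCommClass ℂ (adjointable A E) (adjointable A E) where
  smul_comm z x y := ext_fst (mul_smul_comm z x.1.1 y.1.1).symm

instance : StarModule ℂ (adjointable A E) where
  star_smul z x := ext_fst <| by simp only [coe_star, coe_smul, MulOpposite.unop_op]

instance : CompleteSpace (adjointable A E) :=
  (adjointPairSubring A E).isClosed_topologicalClosure.completeSpace_coe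

instance : CStarRing (adjointable A E) where
  norm_mul_self_le x := by
    rw [norm_eq_norm_fst, norm_eq_norm_fst]
    refine adjointable_induction
      (P := fun p : OperatorPair E => ‖p.1‖ * ‖p.1‖ ≤ ‖unop p.2 * p.1‖)
      (isClosed_le (continuous_fst.norm.mul continuous_fst.norm)
        (continuous_unop_snd.mul continuous_fst).norm) (fun T S h => ?_) x.2
    simpa [toOperatorPair, ← map_mul, sq] using h.norm_sq_le

noncomputable instance : NonUnitalCStarAlgebra (adjointable A E) where

end adjointable

variable (hφ) in
noncomputable def toAdjointable : A →⋆ₙₐ[ℂ] adjointable A E where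
  toFun a := ⟨toOperatorPair (φ a) (φ (star a)), toOperatorPair_mem_adjointable (hφ a)⟩
  map_smul' _ _ := adjointable.ext_fst <| by simp [toOperatorPair, adjointable.coe_smul]
  map_zero' := adjointable.ext_fst <| by simp [toOperatorPair]
  map_add' _ _ := adjointable.ext_fst <| by simp [toOperatorPair]
  map_mul' _ _ := adjointable.ext_fst <| by simp [toOperatorPair]
  map_star' _ := adjointable.ext_fst <| by simp [toOperatorPair, adjointable.coe_star]

lemma norm_toAdjointable (a : A) : ‖toAdjointable hφ a‖ = ‖φ a‖ := by
  rw [adjointable.norm_eq_norm_fst]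
  exact ContinuousLinearMap.norm_completionAlgHom (φ a)

/-- A `⋆`-monomorphism of C⋆-algebras, here into the adjointable operators, is isometric. -/
lemma norm_map_of_mem_kerPerp {a : A} (ha : a ∈ kerPerp φ hφ) : ‖φ a‖ = ‖a‖ := by
  have := isClosed_kerPerp (hφ := hφ)
  let ψ := (toAdjointable hφ).comp (NonUnitalStarSubalgebraClass.subtype (kerPerp φ hφ))
  have hψ : Function.Injective ψ := (injective_iff_map_eq_zero ψ).mpr fun x hx =>
    Subtype.ext <| eq_zero_of_mem_kerPerp x.2 <| norm_eq_zero.mp <| by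
      rw [← norm_toAdjointable (hφ := hφ)]; exact norm_eq_zero.mpr hx
  rw [← norm_toAdjointable (hφ := hφ)]
  exact NonUnitalStarAlgHom.norm_map ψ hψ ⟨a, ha⟩

lemma isClosed_image_kerPerp : IsClosed (φ '' kerPerp φ hφ) := by
  have := isClosed_kerPerp (hφ := hφ)
  have hiso : Isometry fun x : kerPerp φ hφ => φ x := Isometry.of_dist_eq fun x y => by
    rw [dist_eq_norm, dist_eq_norm, ← map_sub]
    exact norm_map_of_mem_kerPerp (x - y).2
  rw [Set.image_eq_range]
  exact hiso.isClosedEmbedding.isClosed_range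

variable (φ) in
structure IsLeftInner (L : E → E → A) : Prop where
  map_left : ∀ (a : A) (ξ η : E), L (φ a ξ) η = a * L ξ η
  star_eq : ∀ ξ η : E, star (L ξ η) = L η ξ
  self_nonneg : ∀ ξ : E, 0 ≤ L ξ ξ
  eq_zero_of_self_eq_zero : ∀ ξ : E, L ξ ξ = 0 → ξ = 0
  map_eq_rankOne : ∀ ξ η : E, φ (L ξ η) = rankOne A ξ η

lemma IsLeftInner.mem_kerPerp {L : E → E → A} (hL : IsLeftInner φ L) (ξ η : E) :
    L ξ η ∈ kerPerp φ hφ := fun b hb => by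
  have h0 : L 0 ξ = 0 := by simpa using hL.map_left 0 0 ξ
  rw [← star_star (L ξ η * b), star_mul, hL.star_eq, ← hL.map_left, map_star_eq_zero hφ hb,
    zero_apply, h0, star_zero]

lemma IsLeftInner.compactOperators_subset {L : E → E → A} (hL : IsLeftInner φ L) :
    compactOperators A E ⊆ φ '' katsuraIdeal φ hφ := by
  intro T hT
  have hspan : Submodule.span ℂ {T : E →L[ℂ] E | ∃ ξ η : E, ∀ ζ : E, T ζ = ξ <• ⟪η, ζ⟫} ≤
      (kerPerp φ hφ).toNonUnitalSubalgebra.toSubmodule.map (φ : A →ₗ[ℂ] (E →L[ℂ] E)) := by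
    refine Submodule.span_le.mpr ?_
    rintro T ⟨ξ, η, hT⟩
    exact ⟨L ξ η, hL.mem_kerPerp (hφ := hφ) ξ η,
      (hL.map_eq_rankOne ξ η).trans (ContinuousLinearMap.ext fun ζ => (hT ζ).symm)⟩
  obtain ⟨a, ha, rfl⟩ := closure_minimal hspan (isClosed_image_kerPerp (hφ := hφ)) hT
  exact ⟨a, ⟨ha, hT⟩, rfl⟩

/-- With `n = a⁻`, positivity of `φ a` makes `φ (n a n) = -φ (n³)` positive, while `n³ ≥ 0`
forces `φ (n³) ≥ 0`; so `φ (n³) = 0`, and faithfulness of `φ` on `(ker φ)^⊥` gives `n = 0`. -/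
lemma nonneg_of_mem_kerPerp {a : A} (ha : a ∈ kerPerp φ hφ) (hsa : IsSelfAdjoint a)
    (hpos : ∀ ζ : E, 0 ≤ ⟪ζ, φ a ζ⟫) : 0 ≤ a := by
  set n := a⁻
  have hn : IsSelfAdjoint n := (CFC.negPart_nonneg a).isSelfAdjoint
  obtain ⟨b, hb, hnb⟩ : ∃ b, IsSelfAdjoint b ∧ n = b * b :=
    CStarAlgebra.nonneg_iff_exists_isSelfAdjoint_and_eq_mul_self.mp (CFC.negPart_nonneg a)
  have hcube : n * n * n = -(n * (a * n)) := by
    conv_rhs => rw [← CFC.posPart_sub_negPart a hsa]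
    rw [sub_mul, CFC.posPart_mul_negPart, zero_sub, mul_neg, neg_neg, mul_assoc]
  have hcube' : n * n * n = star (n * b) * (n * b) := by
    rw [star_mul, hb.star_eq, hn.star_eq, hnb]
    noncomm_ring
  have hnb0 : φ (n * b) = 0 := ContinuousLinearMap.ext fun ζ => by
    show φ (n * b) ζ = 0
    refine (inner_self (A := A)).mp (le_antisymm ?_ inner_self_nonneg)
    calc ⟪φ (n * b) ζ, φ (n * b) ζ⟫ = ⟪ζ, φ (n * n * n) ζ⟫ := by
          rw [hcube', inner_map_star_mul hφ]
      _ = -⟪φ n ζ, φ (a * n) ζ⟫ := by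
          rw [hcube, map_neg, neg_apply, inner_neg_right, ← hn.star_eq, inner_map_star_mul hφ,
            hn.star_eq]
      _ ≤ 0 := neg_nonpos.mpr (by rw [map_mul]; exact hpos _)
  have hn0 : n * n * n = 0 := by
    refine eq_zero_of_mem_kerPerp (hφ := hφ) ?_ (by rw [hcube', map_mul, hnb0, mul_zero])
    rw [hcube]
    exact neg_mem (mul_mem_kerPerp_left n (mul_mem_kerPerp_right ha n))
  exact CStarAlgebra.nonneg_iff_isSelfAdjoint_and_negPart_eq_zero.mpr
    ⟨hsa, hn.eq_zero_of_mul_mul_self_eq_zero hn0⟩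

/-- The left inner product `L ξ η` is the unique preimage of `θ_{ξ,η}` in `J`. -/
lemma exists_isLeftInner (h : compactOperators A E ⊆ φ '' katsuraIdeal φ hφ) :
    ∃ L : E → E → A, IsLeftInner φ L := by
  choose L hLJ hLφ using fun ξ η : E => h (rankOne_mem_compactOperators ξ η)
  have eq_L {a : A} {ξ η : E} (ha : a ∈ kerPerp φ hφ) (haφ : φ a = rankOne A ξ η) : a = L ξ η :=
    injOn_kerPerp ha (hLJ ξ η).1 (haφ.trans (hLφ ξ η).symm)
  have hstar (ξ η : E) : star (L ξ η) = L η ξ :=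
    eq_L (star_mem (hLJ ξ η).1) ((hφ (L ξ η)).unique (by
      rw [hLφ]; exact isAdjointPair_rankOne ξ η))
  refine ⟨L, ⟨fun a ξ η => (eq_L (mul_mem_kerPerp_left a (hLJ ξ η).1) ?_).symm, hstar,
    fun ξ => ?_, fun ξ h0 => ?_, hLφ⟩⟩
  · rw [map_mul, hLφ, (hφ a).mul_rankOne]
  · exact nonneg_of_mem_kerPerp (hLJ ξ ξ).1 (hstar ξ ξ) fun ζ => by
      rw [hLφ]; exact inner_rankOne_self_nonneg ξ ζ
  · exact eq_zero_of_rankOne_self_eq_zero (by rw [← hLφ, h0, map_zero])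

end CStarModuleOld

open CStarModuleOld in
/-- Let `E` be a C*-correspondence over `A` with left action `Φ`.  Then `E` admits a
Hilbert `A`-bimodule structure if and only if `K(E) ⊆ Φ(A)` and
`Φ⁻¹(K(E)) = ker Φ ⊕ J_E` where `J_E = (ker Φ)^⊥ ∩ Φ⁻¹(K(E))`; equivalently, if and only
if the restriction of `Φ` to `J_E` is a *-isomorphism onto `K(E)`. -/
theorem corr_bimodule_iff_decomposition {A E : Type*}
    [NonUnitalCStarAlgebra A] [PartialOrder A] [StarOrderedRing A]
    [NormedAddCommGroup E] [NormedSpace ℂ E] [SMul Aᵐᵒᵖ E] [CStarModuleOld A E]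
    (Φ : A → E →L[ℂ] E)  -- the left action
    (hΦadd : ∀ a b : A, Φ (a + b) = Φ a + Φ b)
    (hΦsmul : ∀ (z : ℂ) (a : A), Φ (z • a) = z • Φ a)
    (hΦmul : ∀ a b : A, Φ (a * b) = Φ a * Φ b)
    (hΦadj : ∀ (a : A) (ξ η : E), (inner A (Φ a ξ) η : A) = inner A ξ (Φ (star a) η)) :
    -- `K(E)` is the closed linear span of the rank-one operators:
    ∀ KE : Set (E →L[ℂ] E),
      KE = closure (Submodule.span ℂ
        {T : E →L[ℂ] E | ∃ ξ η : E, ∀ ζ : E, T ζ = ξ <• (inner A η ζ : A)} :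
          Set (E →L[ℂ] E)) →
    -- `J_E = (ker Φ)^⊥ ∩ Φ⁻¹(K(E))`:
    ∀ JE : Set A,
      JE = {a : A | (∀ b : A, Φ b = 0 → a * b = 0) ∧ Φ a ∈ KE} →
    -- the Hilbert bimodule structure predicate:
    ∀ Bimod : Prop,
      (Bimod ↔ ∃ L : E → E → A,
        (∀ (a : A) (ξ η : E), L (Φ a ξ) η = a * L ξ η) ∧
        (∀ ξ η : E, star (L ξ η) = L η ξ) ∧
        (∀ ξ : E, 0 ≤ L ξ ξ) ∧
        (∀ ξ : E, L ξ ξ = 0 → ξ = 0) ∧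
        (∀ ξ η ζ : E, Φ (L ξ η) ζ = ξ <• (inner A η ζ : A))) →
    -- the two characterizations:
    (Bimod ↔ (KE ⊆ Set.range Φ ∧
      ∀ a : A, Φ a ∈ KE ↔ ∃ b c : A, Φ b = 0 ∧ c ∈ JE ∧ a = b + c)) ∧
    (Bimod ↔ (Set.InjOn Φ JE ∧ Φ '' JE = KE)) := by
  rintro _ rfl _ rfl Bimod hBimod
  let φ : A →ₙₐ[ℂ] (E →L[ℂ] E) :=
    { toFun := Φ, map_add' := hΦadd, map_smul' := hΦsmul, map_mul' := hΦmul,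
      map_zero' := by simpa using hΦadd 0 0 }
  have hφ : ∀ a, IsAdjointPair A (φ a) (φ (star a)) := hΦadj
  have hImage : Bimod ↔ φ '' katsuraIdeal φ hφ = compactOperators A E := by
    refine hBimod.trans ⟨fun ⟨L, h₁, h₂, h₃, h₄, h₅⟩ => ?_, fun h => ?_⟩
    · have hL : IsLeftInner φ L := ⟨h₁, h₂, h₃, h₄, fun ξ η => ContinuousLinearMap.ext (h₅ ξ η)⟩
      exact subset_antisymm (Set.image_subset_iff.mpr fun _ ha => ha.2) hL.compactOperators_subset
    · obtain ⟨L, hL⟩ := exists_isLeftInner h.ge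
      exact ⟨L, hL.map_left, hL.star_eq, hL.self_nonneg, hL.eq_zero_of_self_eq_zero,
        fun ξ η => DFunLike.congr_fun (hL.map_eq_rankOne ξ η)⟩
  have hInj : Set.InjOn φ (katsuraIdeal φ hφ) := injOn_kerPerp.mono Set.inter_subset_left
  exact ⟨hImage.trans (image_inter_preimage_eq_iff_decomposition φ _ _),
    hImage.trans (and_iff_right hInj).symm⟩
end
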